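/- Let τ = e^{−πi/9}. The subgroup of GL(3,ℂ) generated by the two matrices a = τ·diag(ω², −ω², ω) and b = τ·[[ω/2, −ω/2, ω²/√2],[−ω/2, ω/2, ω²/√2],[ω²/√2, ω²/√2, 0]] is a finite group of order 162. -/

import Mathlib

open Matrix Complex

noncomputable section

/-- ω = e^{2πi/3}, a primitive third root of unity. -/
def ω : ℂ := Complex.exp (2 * Real.pi * Complex.I / 3)

/-- τ = e^{−πi/9}. -/
def τ : ℂ := Complex.exp (-(Real.pi * Complex.I) / 9)

/-- a = τ·diag(ω², −ω², ω). -/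
def ma : Matrix (Fin 3) (Fin 3) ℂ := τ • diagonal ![ω ^ 2, -ω ^ 2, ω]

/-- b = τ·[[ω/2, −ω/2, ω²/√2],[−ω/2, ω/2, ω²/√2],[ω²/√2, ω²/√2, 0]]. -/
def mb : Matrix (Fin 3) (Fin 3) ℂ :=
  τ • !![ω / 2, -ω / 2, ω ^ 2 / (Real.sqrt 2 : ℂ);
         -ω / 2, ω / 2, ω ^ 2 / (Real.sqrt 2 : ℂ);
         ω ^ 2 / (Real.sqrt 2 : ℂ), ω ^ 2 / (Real.sqrt 2 : ℂ), 0]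

/-!
Conjugating by the involution `hadamardQ` (a normalised Hadamard block on the first two
coordinates) makes both generators monomial: `Q a Q = τ • [[0, ω², 0], [ω², 0, 0], [0, 0, ω]]`
and `Q b Q = τ • [[0, 0, ω²], [0, ω, 0], [ω², 0, 0]]`. Since `τ ω² = -(τ²)⁸` and `τ ω = -(τ²)²`,
these are `diag (ζ ^ f) * sign σ • P_σ` with `ζ = τ²` a primitive ninth root of unity, i.e. images
of elements `monoA`, `monoB` of `(ℤ/9)³ ⋊ S₃` under a faithful representation. There the
generated group is `N ⋊ S₃`, where `N ≅ ℤ/9 × ℤ/3` (the vectors `f` with all `f i` congruent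
mod 3 and `∑ f = 0`) is spanned by the diagonal parts of `monoA²` and `monoA⁻² monoB²`. So the
generated group contains `N`, hence the permutation parts `(0 1)`, `(0 2)` of the generators, which
generate `S₃`; conversely `N ⋊ S₃` is a subgroup containing `monoA`, `monoB` because `N` is
`S₃`-stable. The order is therefore `27 · 6 = 162`.
-/

open Equiv

section ZModPowHom

variable {G : Type*} [Monoid G] {m : ℕ} [NeZero m]

def zmodPowHom (g : G) (hg : g ^ m = 1) : Multiplicative (ZMod m) →* G where
  toFun a := g ^ a.toAdd.val
  map_one' := by simp
  map_mul' a b := by rw [toAdd_mul, ZMod.val_add, ← pow_eq_pow_mod _ hg, pow_add]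

@[simp]
lemma zmodPowHom_apply (g : G) (hg : g ^ m = 1) (a : Multiplicative (ZMod m)) :
    zmodPowHom g hg a = g ^ a.toAdd.val :=
  rfl

end ZModPowHom

abbrev MonomialGroup (n : Type*) (m : ℕ) :=
  (n → Multiplicative (ZMod m)) ⋊[mulAutArrow] Perm n

section MonomialHom

variable {n R : Type*} [Fintype n] [DecidableEq n] [CommRing R] {m : ℕ} [NeZero m]

def diagonalPowHom (ζ : R) (hζ : ζ ^ m = 1) : (n → Multiplicative (ZMod m)) →* GL n R :=
  ((diagonalRingHom n R).toMonoidHom.comp ((zmodPowHom ζ hζ).compLeft n)).toHomUnits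

@[simp]
lemma coe_diagonalPowHom (ζ : R) (hζ : ζ ^ m = 1) (f : n → Multiplicative (ZMod m)) :
    (diagonalPowHom ζ hζ f : Matrix n n R) = diagonal fun i => ζ ^ (f i).toAdd.val :=
  rfl

def signedPermHom : Perm n →* GL n R :=
  MonoidHom.toHomUnits
    { toFun σ := (Perm.sign σ : R) • permMatrixHom σ
      map_one' := by simp
      map_mul' σ τ := by rw [map_mul, map_mul, smul_mul_smul_comm, Units.val_mul, Int.cast_mul] }

@[simp]
lemma coe_signedPermHom (σ : Perm n) :
    ((signedPermHom σ : GL n R) : Matrix n n R) = (Perm.sign σ : R) • σ⁻¹.permMatrix R :=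
  rfl

lemma permMatrix_mul_diagonal (σ : Perm n) (d : n → R) :
    σ.permMatrix R * diagonal d = diagonal (d ∘ σ) * σ.permMatrix R := by
  ext i j
  simp only [Perm.permMatrix, PEquiv.toMatrix_toPEquiv_mul, PEquiv.mul_toMatrix_toPEquiv,
    submatrix_apply, diagonal_apply, id, Equiv.eq_symm_apply, Function.comp_apply]

def monomialHom (ζ : R) (hζ : ζ ^ m = 1) : MonomialGroup n m →* GL n R :=
  SemidirectProduct.lift (diagonalPowHom ζ hζ) signedPermHom fun σ => by
    ext f : 1
    rw [MonoidHom.comp_apply, MonoidHom.comp_apply, MulEquiv.coe_toMonoidHom,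
      MulEquiv.coe_toMonoidHom, MulAut.conj_apply, eq_mul_inv_iff_mul_eq, Units.ext_iff]
    simp only [Units.val_mul, coe_diagonalPowHom, coe_signedPermHom, mul_smul_comm,
      smul_mul_assoc, permMatrix_mul_diagonal]
    rfl

lemma monomialHom_apply_apply (ζ : R) (hζ : ζ ^ m = 1) (x : MonomialGroup n m) (i j : n) :
    (monomialHom ζ hζ x : Matrix n n R) i j =
      if x.right⁻¹ i = j then (Perm.sign x.right : R) * ζ ^ (x.left i).toAdd.val else 0 := by
  change ((diagonalPowHom ζ hζ x.left * signedPermHom x.right : GL n R) : Matrix n n R) i j = _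
  simp [PEquiv.toMatrix_apply, diagonal_mul, mul_comm]

lemma monomialHom_injective [Nontrivial R] {ζ : R} (hζ : IsPrimitiveRoot ζ m) :
    Function.Injective (monomialHom (n := n) ζ hζ.pow_eq_one) := by
  rw [injective_iff_map_eq_one]
  intro x hx
  have hentry (i j : n) := congrArg (fun g : GL n R => (g : Matrix n n R) i j) hx
  simp only [monomialHom_apply_apply, Units.val_one, one_apply] at hentry
  have hunit (i : n) : IsUnit ((Perm.sign x.right : R) * ζ ^ (x.left i).toAdd.val) :=
    ((Perm.sign x.right).isUnit.map (Int.castRingHom R)).mul ((hζ.isUnit (NeZero.ne m)).pow _)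
  have hright : x.right = 1 := by
    ext i
    by_contra h
    have hi := hentry (x.right i) i
    rw [if_pos (Perm.inv_eq_iff_eq.mpr rfl)] at hi
    exact (hunit _).ne_zero (hi.trans (if_neg h))
  refine SemidirectProduct.ext (funext fun i => ?_) hright
  have hi := hentry i i
  simp only [hright, inv_one, Perm.one_apply, map_one, Units.val_one, Int.cast_one,
    one_mul] at hi
  rw [SemidirectProduct.one_left, Pi.one_apply, ← toAdd_eq_zero, ← ZMod.val_eq_zero]
  exact Nat.eq_zero_of_dvd_of_lt ((hζ.pow_eq_one_iff_dvd _).mp hi) (ZMod.val_lt _)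

end MonomialHom

namespace SemidirectProduct

variable {N G : Type*} [Group N] [Group G] {φ : G →* MulAut N}

def leftSubgroup (K : Subgroup N) (hK : ∀ g, ∀ k ∈ K, φ g k ∈ K) : Subgroup (N ⋊[φ] G) where
  carrier := {x | x.left ∈ K}
  mul_mem' hx hy := K.mul_mem hx (hK _ _ hy)
  one_mem' := K.one_mem
  inv_mem' hx := hK _ _ (K.inv_mem hx)

variable {K : Subgroup N} {hK : ∀ g, ∀ k ∈ K, φ g k ∈ K}

lemma card_leftSubgroup : Nat.card (leftSubgroup K hK) = Nat.card K * Nat.card G := by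
  rw [← Nat.card_prod]
  exact Nat.card_congr
    { toFun x := (⟨x.1.left, x.2⟩, x.1.right)
      invFun p := ⟨⟨p.1, p.2⟩, p.1.2⟩
      left_inv _ := rfl
      right_inv _ := rfl }

lemma leftSubgroup_le {H : Subgroup (N ⋊[φ] G)} (hl : ∀ k ∈ K, inl k ∈ H)
    (hr : ∀ g, inr g ∈ H) : leftSubgroup K hK ≤ H :=
  fun x hx => inl_left_mul_inr_right x ▸ H.mul_mem (hl _ hx) (hr _)

end SemidirectProduct

lemma closure_swap_zero_one_swap_zero_two :
    Subgroup.closure {swap (0 : Fin 3) 1, swap 0 2} = ⊤ := by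
  rw [eq_top_iff, ← Perm.closure_isSwap, Subgroup.closure_le]
  have h01 : swap (0 : Fin 3) 1 ∈ Subgroup.closure {swap (0 : Fin 3) 1, swap 0 2} :=
    Subgroup.subset_closure (by simp)
  have h02 : swap (0 : Fin 3) 2 ∈ Subgroup.closure {swap (0 : Fin 3) 1, swap 0 2} :=
    Subgroup.subset_closure (by simp)
  have h12 : swap (1 : Fin 3) 2 = swap 0 1 * swap 0 2 * swap 0 1 := by decide
  rintro σ ⟨x, y, hxy, rfl⟩
  fin_cases x <;> fin_cases y <;>
    simp_all [swap_comm (1 : Fin 3) 0, swap_comm (2 : Fin 3) 0, swap_comm (2 : Fin 3) 1,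
      Subgroup.mul_mem]

section MonomialGenerators

open SemidirectProduct Multiplicative

def monoA : MonomialGroup (Fin 3) 9 := ⟨![ofAdd 8, ofAdd 8, ofAdd 2], swap 0 1⟩

def monoB : MonomialGroup (Fin 3) 9 := ⟨![ofAdd 8, ofAdd 2, ofAdd 8], swap 0 2⟩

def diagU : Fin 3 → Multiplicative (ZMod 9) := ![ofAdd 7, ofAdd 7, ofAdd 4]

def diagK : Fin 3 → Multiplicative (ZMod 9) := ![ofAdd 0, ofAdd 6, ofAdd 3]

lemma diagU_pow_nine : diagU ^ 9 = 1 := by decide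

lemma diagK_pow_three : diagK ^ 3 = 1 := by decide

lemma monoA_sq : monoA ^ 2 = inl diagU := by
  refine SemidirectProduct.ext ?_ ?_ <;> decide

lemma inv_monoA_sq_mul_monoB_sq : (monoA ^ 2)⁻¹ * monoB ^ 2 = inl diagK := by
  refine SemidirectProduct.ext ?_ ?_ <;> decide

def diagEmbedding :
    Multiplicative (ZMod 9) × Multiplicative (ZMod 3) →* (Fin 3 → Multiplicative (ZMod 9)) :=
  (zmodPowHom diagU diagU_pow_nine).coprod (zmodPowHom diagK diagK_pow_three)

lemma diagEmbedding_injective : Function.Injective diagEmbedding := by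
  rw [injective_iff_map_eq_one]
  decide

abbrev diagN : Subgroup (Fin 3 → Multiplicative (ZMod 9)) := diagEmbedding.range

lemma mulAutArrow_mem_diagN (σ : Perm (Fin 3)) {f} (hf : f ∈ diagN) : mulAutArrow σ f ∈ diagN := by
  have hgen : ∀ σ : Perm (Fin 3), mulAutArrow σ diagU ∈ diagN ∧ mulAutArrow σ diagK ∈ diagN := by
    simp only [MonoidHom.mem_range]
    decide
  obtain ⟨⟨x, y⟩, rfl⟩ := hf
  simp only [diagEmbedding, MonoidHom.coprod_apply, zmodPowHom_apply, map_mul, map_pow]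
  exact mul_mem (pow_mem (hgen σ).1 _) (pow_mem (hgen σ).2 _)

lemma monoA_left_mem_diagN : monoA.left ∈ diagN := by
  simp only [MonoidHom.mem_range]
  decide

lemma monoB_left_mem_diagN : monoB.left ∈ diagN := by
  simp only [MonoidHom.mem_range]
  decide

lemma inl_mem_closure_monoA_monoB {f} (hf : f ∈ diagN) :
    inl f ∈ Subgroup.closure {monoA, monoB} := by
  have hA : monoA ∈ Subgroup.closure {monoA, monoB} := Subgroup.subset_closure (by simp)
  have hB : monoB ∈ Subgroup.closure {monoA, monoB} := Subgroup.subset_closure (by simp)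
  obtain ⟨⟨x, y⟩, rfl⟩ := hf
  simp only [diagEmbedding, MonoidHom.coprod_apply, zmodPowHom_apply, map_mul, map_pow,
    ← monoA_sq, ← inv_monoA_sq_mul_monoB_sq]
  exact mul_mem (pow_mem (pow_mem hA 2) _)
    (pow_mem (mul_mem (inv_mem (pow_mem hA 2)) (pow_mem hB 2)) _)

lemma inr_mem_closure_monoA_monoB (σ : Perm (Fin 3)) :
    inr σ ∈ Subgroup.closure {monoA, monoB} := by
  have hright (x) (hx : x ∈ ({monoA, monoB} : Set (MonomialGroup (Fin 3) 9)))
      (hxN : x.left ∈ diagN) : inr x.right ∈ Subgroup.closure {monoA, monoB} := by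
    rw [← inv_mul_cancel_left (inl x.left) (inr x.right), inl_left_mul_inr_right]
    exact mul_mem (inv_mem (inl_mem_closure_monoA_monoB hxN)) (Subgroup.subset_closure hx)
  suffices Subgroup.closure {swap (0 : Fin 3) 1, swap 0 2} ≤
      (Subgroup.closure {monoA, monoB}).comap inr from
    this (closure_swap_zero_one_swap_zero_two ▸ Subgroup.mem_top σ)
  rw [Subgroup.closure_le]
  rintro _ (rfl | rfl)
  · exact hright monoA (by simp) monoA_left_mem_diagN
  · exact hright monoB (by simp) monoB_left_mem_diagN

lemma closure_monoA_monoB :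
    Subgroup.closure {monoA, monoB} = leftSubgroup diagN mulAutArrow_mem_diagN := by
  refine le_antisymm ?_
    (leftSubgroup_le (fun _ => inl_mem_closure_monoA_monoB) inr_mem_closure_monoA_monoB)
  rw [Subgroup.closure_le]
  rintro _ (rfl | rfl)
  exacts [monoA_left_mem_diagN, monoB_left_mem_diagN]

lemma card_closure_monoA_monoB : Nat.card (Subgroup.closure {monoA, monoB}) = 162 := by
  rw [closure_monoA_monoB, card_leftSubgroup,
    ← Nat.card_congr (MonoidHom.ofInjective diagEmbedding_injective).toEquiv, Nat.card_prod,
    Nat.card_perm]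
  simp [Nat.factorial]

end MonomialGenerators

lemma tau_pow_nine : τ ^ 9 = -1 := by
  rw [τ, ← Complex.exp_nat_mul, show ((9 : ℕ) : ℂ) * (-(Real.pi * I) / 9) = -(Real.pi * I) by
    push_cast; ring, Complex.exp_neg, Complex.exp_pi_mul_I]
  norm_num

lemma isPrimitiveRoot_tau_sq : IsPrimitiveRoot (τ ^ 2) 9 := by
  have h : τ ^ 2 = (Complex.exp (2 * Real.pi * I / (9 : ℕ)))⁻¹ := by
    rw [τ, ← Complex.exp_nat_mul, ← Complex.exp_neg]
    congr 1
    push_cast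
    ring
  exact h ▸ (Complex.isPrimitiveRoot_exp 9 (by norm_num)).inv

lemma omega_eq_tau_pow : ω = τ ^ 12 := by
  rw [ω, τ, ← Complex.exp_nat_mul, Complex.exp_eq_exp_iff_exists_int]
  exact ⟨1, by push_cast; ring⟩

lemma tau_sq_pow_eight : (τ ^ 2) ^ 8 = -(τ * ω ^ 2) := by
  rw [omega_eq_tau_pow]
  linear_combination τ ^ 16 * tau_pow_nine

lemma tau_sq_pow_two : (τ ^ 2) ^ 2 = -(τ * ω) := by
  rw [omega_eq_tau_pow]
  linear_combination τ ^ 4 * tau_pow_nine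

abbrev monomialRep : MonomialGroup (Fin 3) 9 →* GL (Fin 3) ℂ :=
  monomialHom (τ ^ 2) isPrimitiveRoot_tau_sq.pow_eq_one

lemma monomialRep_monoA :
    (monomialRep monoA : Matrix (Fin 3) (Fin 3) ℂ) = τ • !![0, ω ^ 2, 0; ω ^ 2, 0, 0; 0, 0, ω] := by
  ext i j
  rw [monomialHom_apply_apply]
  fin_cases i <;> fin_cases j <;>
    simp [monoA, ZMod.val_ofNat, swap_apply_of_ne_of_ne, tau_sq_pow_eight, tau_sq_pow_two]

lemma monomialRep_monoB :
    (monomialRep monoB : Matrix (Fin 3) (Fin 3) ℂ) = τ • !![0, 0, ω ^ 2; 0, ω, 0; ω ^ 2, 0, 0] := by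
  ext i j
  rw [monomialHom_apply_apply]
  fin_cases i <;> fin_cases j <;>
    simp [monoB, ZMod.val_ofNat, swap_apply_of_ne_of_ne, tau_sq_pow_eight, tau_sq_pow_two]

def hadamardQ : Matrix (Fin 3) (Fin 3) ℂ :=
  !![(Real.sqrt 2 : ℂ)⁻¹, (Real.sqrt 2 : ℂ)⁻¹, 0;
     (Real.sqrt 2 : ℂ)⁻¹, -(Real.sqrt 2 : ℂ)⁻¹, 0;
     0, 0, 1]

lemma ofReal_sqrt_two_sq : (Real.sqrt 2 : ℂ) ^ 2 = 2 := by
  rw [← Complex.ofReal_pow, Real.sq_sqrt zero_le_two]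
  norm_num

lemma hadamardQ_mul_self : hadamardQ * hadamardQ = 1 := by
  ext i j
  fin_cases i <;> fin_cases j <;> simp [hadamardQ, mul_apply, Fin.sum_univ_three] <;>
    field_simp <;> rw [ofReal_sqrt_two_sq] <;> ring

lemma ma_eq_hadamardQ_conj :
    ma = hadamardQ * (monomialRep monoA : Matrix (Fin 3) (Fin 3) ℂ) * hadamardQ := by
  rw [monomialRep_monoA, Matrix.mul_smul, Matrix.smul_mul, ma, hadamardQ]
  congr 1
  ext i j
  fin_cases i <;> fin_cases j <;> simp [mul_apply, Fin.sum_univ_three] <;> field_simp <;>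
    rw [ofReal_sqrt_two_sq] <;> ring

lemma mb_eq_hadamardQ_conj :
    mb = hadamardQ * (monomialRep monoB : Matrix (Fin 3) (Fin 3) ℂ) * hadamardQ := by
  rw [monomialRep_monoB, Matrix.mul_smul, Matrix.smul_mul, mb, hadamardQ]
  congr 1
  ext i j
  fin_cases i <;> fin_cases j <;> simp [mul_apply, Fin.sum_univ_three] <;> field_simp <;>
    rw [ofReal_sqrt_two_sq]

/-- The subgroup of GL(3,ℂ) generated by a and b is a finite group of order 162. -/
theorem stmt14 (a b : GL (Fin 3) ℂ)
    (ha : (a : Matrix (Fin 3) (Fin 3) ℂ) = ma)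
    (hb : (b : Matrix (Fin 3) (Fin 3) ℂ) = mb) :
    Nat.card (Subgroup.closure ({a, b} : Set (GL (Fin 3) ℂ))) = 162 := by
  let Q : GL (Fin 3) ℂ := ⟨hadamardQ, hadamardQ, hadamardQ_mul_self, hadamardQ_mul_self⟩
  let ψ := (MulAut.conj Q).toMonoidHom.comp monomialRep
  have hψ : Function.Injective ψ :=
    (MulAut.conj Q).injective.comp (monomialHom_injective isPrimitiveRoot_tau_sq)
  have hA : ψ monoA = a := Units.ext (ha.trans ma_eq_hadamardQ_conj).symm
  have hB : ψ monoB = b := Units.ext (hb.trans mb_eq_hadamardQ_conj).symm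
  rw [← hA, ← hB, ← Set.image_pair, ← MonoidHom.map_closure, Subgroup.card_map_of_injective hψ,
    card_closure_monoA_monoB]
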